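/- arXiv:2211.07811 — 6 statements merged into one kernel-verified Lean document; each statement's English description precedes it below -/
import Mathlib

section
/- Let $g \geq 1$ and $m$ be positive integers with $g/2 + 1 \leq m \leq g+1$. The numerical semigroups $S$ of genus $g$ with multiplicity $m$ and Frobenius number less than $2m$ are in bijection with subsets $B \subseteq \{1,\dots,m-1\}$ of size $2m-g-2$, via $B \mapsto (m+B) \cup \{0, m\} \cup [2m, \infty)$. In particular, the number of such semigroups is $\binom{m-1}{2m-g-2}$. -/
open Set

private def fS (m : ℕ) (B : Finset ℕ) : Set ℕ :=
  ((fun b => m + b) '' (B : Set ℕ)) ∪ {0, m} ∪ {x | 2 * m ≤ x}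

private def gapF (m : ℕ) (B : Finset ℕ) : Finset ℕ :=
  Finset.Icc 1 (m-1) ∪ (Finset.Icc 1 (m-1) \ B).image (fun b => m + b)

private lemma compl_fS (m : ℕ) (hm : 2 ≤ m) (B : Finset ℕ)
    (hB : (B : Set ℕ) ⊆ Set.Icc 1 (m-1)) :
    (fS m B)ᶜ = ↑(gapF m B) := by
  ext x
  simp only [fS, gapF, Set.mem_compl_iff, Set.mem_union, Set.mem_image, Set.mem_insert_iff,
    Set.mem_singleton_iff, Set.mem_setOf_eq, Finset.coe_union, Finset.coe_image,
    Finset.coe_sdiff, Finset.coe_Icc, Set.mem_Icc, Set.mem_diff, Finset.mem_coe]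
  constructor
  · intro h
    push_neg at h
    obtain ⟨⟨hB', hx0, hxm⟩, hx2m⟩ := h
    by_cases hlt : x < m
    · left; omega
    · right
      refine ⟨x - m, ⟨⟨by omega, by omega⟩, ?_⟩, by omega⟩
      intro hmem
      exact hB' _ hmem (by omega)
  · rintro (⟨hx1, hx2⟩ | ⟨b, ⟨⟨hb1, hb2⟩, hbB⟩, heqb⟩)
    · push_neg
      refine ⟨⟨?_, by omega, by omega⟩, by omega⟩
      rintro b hb heq
      have h2 : m + b = x := heq
      have := hB hb
      simp only [Set.mem_Icc] at this
      omega
    · push_neg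
      have hxe : m + b = x := heqb
      refine ⟨⟨?_, by omega, by omega⟩, by omega⟩
      rintro b' hb' heq
      have h2 : m + b' = x := heq
      have : b' = b := by omega
      exact hbB (this ▸ hb')

private lemma card_gapF (m : ℕ) (hm : 2 ≤ m) (B : Finset ℕ)
    (hB : B ⊆ Finset.Icc 1 (m-1)) :
    (gapF m B).card = (m-1) + ((m-1) - B.card) := by
  rw [gapF, Finset.card_union_of_disjoint, Finset.card_image_of_injective _
    (add_right_injective m), Finset.card_sdiff_of_subset hB, Nat.card_Icc]
  · congr 1 <;> omega
  · rw [Finset.disjoint_left]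
    intro a ha hb
    simp only [Finset.mem_Icc] at ha
    simp only [Finset.mem_image, Finset.mem_sdiff, Finset.mem_Icc] at hb
    omega

private lemma mem_fS_cases (m : ℕ) (B : Finset ℕ)
    (hB : (B : Set ℕ) ⊆ Set.Icc 1 (m-1)) {x : ℕ} (hx : x ∈ fS m B) :
    x = 0 ∨ m ≤ x := by
  rcases hx with (⟨b, hb, heq⟩ | h) | h
  · have h2 : m + b = x := heq
    have := hB hb; simp only [Set.mem_Icc] at this; right; omega
  · simp only [Set.mem_insert_iff, Set.mem_singleton_iff] at h
    rcases h with rfl | rfl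
    · left; rfl
    · right; exact le_rfl
  · simp only [Set.mem_setOf_eq] at h; right; omega

theorem stmt_4 (g m : ℕ) (hg : 1 ≤ g) (h1 : g + 2 ≤ 2 * m) (h2 : m ≤ g + 1) :
    Set.BijOn
      (fun B : Finset ℕ => ((fun b => m + b) '' (B : Set ℕ)) ∪ {0, m} ∪ {x | 2 * m ≤ x})
      {B : Finset ℕ | (B : Set ℕ) ⊆ Set.Icc 1 (m - 1) ∧ B.card = 2 * m - g - 2}
      {S : Set ℕ | 0 ∈ S ∧ (∀ a ∈ S, ∀ b ∈ S, a + b ∈ S) ∧ Sᶜ.Finite ∧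
        Sᶜ.ncard = g ∧ sInf (S \ {0}) = m ∧ sSup Sᶜ < 2 * m} ∧
    {S : Set ℕ | 0 ∈ S ∧ (∀ a ∈ S, ∀ b ∈ S, a + b ∈ S) ∧ Sᶜ.Finite ∧
        Sᶜ.ncard = g ∧ sInf (S \ {0}) = m ∧ sSup Sᶜ < 2 * m}.ncard
      = Nat.choose (m - 1) (2 * m - g - 2) := by
  have hm : 2 ≤ m := by omega
  have hbij : Set.BijOn (fun B : Finset ℕ => fS m B)
      {B : Finset ℕ | (B : Set ℕ) ⊆ Set.Icc 1 (m - 1) ∧ B.card = 2 * m - g - 2}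
      {S : Set ℕ | 0 ∈ S ∧ (∀ a ∈ S, ∀ b ∈ S, a + b ∈ S) ∧ Sᶜ.Finite ∧
        Sᶜ.ncard = g ∧ sInf (S \ {0}) = m ∧ sSup Sᶜ < 2 * m} := by
    refine ⟨?_, ?_, ?_⟩
    · -- MapsTo
      rintro B ⟨hB, hcard⟩
      have hcompl := compl_fS m hm B hB
      have hBsub : B ⊆ Finset.Icc 1 (m-1) := by
        intro b hb; have := hB hb; simpa [Finset.mem_Icc] using this
      have h0 : (0 : ℕ) ∈ fS m B := Or.inl (Or.inr (Or.inl rfl))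
      have hmmem : m ∈ fS m B := Or.inl (Or.inr (Or.inr rfl))
      refine ⟨h0, ?_, ?_, ?_, ?_, ?_⟩
      · intro a ha b hb
        rcases mem_fS_cases m B hB ha with rfl | ha'
        · simpa using hb
        rcases mem_fS_cases m B hB hb with rfl | hb'
        · simpa using ha
        · exact Or.inr (by simp only [Set.mem_setOf_eq]; omega)
      · rw [hcompl]; exact Finset.finite_toSet _
      · rw [hcompl, Set.ncard_coe_finset, card_gapF m hm B hBsub, hcard]; omega
      · apply le_antisymm
        · have hmem2 : m ∈ fS m B \ ({0} : Set ℕ) :=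
            ⟨hmmem, by simp only [Set.mem_singleton_iff]; omega⟩
          exact Nat.sInf_le hmem2
        · refine le_csInf ⟨m, hmmem, by simp only [Set.mem_singleton_iff]; omega⟩ ?_
          rintro x ⟨hx, hx0⟩
          rcases mem_fS_cases m B hB hx with rfl | h
          · simp at hx0
          · exact h
      · rw [hcompl]
        have hne : ((gapF m B : Finset ℕ) : Set ℕ).Nonempty := by
          refine ⟨1, ?_⟩
          simp only [gapF, Finset.coe_union, Set.mem_union, Finset.mem_coe, Finset.mem_Icc]
          left; constructor <;> omega
        have : sSup ((gapF m B : Finset ℕ) : Set ℕ) ≤ 2*m - 1 := by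
          apply csSup_le hne
          intro x hx
          simp only [gapF, Finset.coe_union, Set.mem_union, Finset.mem_coe, Finset.mem_Icc,
            Finset.mem_image, Finset.mem_sdiff] at hx
          rcases hx with h | ⟨b, ⟨hb, _⟩, rfl⟩
          · omega
          · omega
        omega
    · -- InjOn
      rintro B ⟨hB, _⟩ B' ⟨hB', _⟩ heq
      have key : ∀ (C : Finset ℕ), (C : Set ℕ) ⊆ Set.Icc 1 (m-1) →
          ∀ b, 1 ≤ b → b ≤ m - 1 → (m + b ∈ fS m C ↔ b ∈ C) := by
        intro C hC b hb1 hb2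
        constructor
        · intro h
          rcases h with (⟨b', hb', heq'⟩ | h) | h
          · have heq2 : m + b' = m + b := heq'
            have : b' = b := by omega
            exact Finset.mem_coe.mp (this ▸ hb')
          · simp only [Set.mem_insert_iff, Set.mem_singleton_iff] at h; omega
          · have h2 : 2 * m ≤ m + b := h; omega
        · intro h; exact Or.inl (Or.inl ⟨b, h, rfl⟩)
      have heq' : fS m B = fS m B' := heq
      ext b
      by_cases hb : 1 ≤ b ∧ b ≤ m - 1
      · rw [← key B hB b hb.1 hb.2, ← key B' hB' b hb.1 hb.2, heq']
      · constructor <;> intro h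
        · exfalso; have := hB h; simp only [Set.mem_Icc] at this; omega
        · exfalso; have := hB' h; simp only [Set.mem_Icc] at this; omega
    · -- SurjOn
      rintro S ⟨h0, hadd, hfin, hgen, hinf, hsup⟩
      have hSinf : S.Infinite := by
        have := hfin.infinite_compl
        rwa [compl_compl] at this
      have hne : (S \ {0}).Nonempty := (hSinf.diff (Set.finite_singleton 0)).nonempty
      have hmmem : m ∈ S \ {0} := hinf ▸ Nat.sInf_mem hne
      have hlb : ∀ x ∈ S, x ≠ 0 → m ≤ x := by
        intro x hx hx0
        have hmem2 : x ∈ S \ ({0} : Set ℕ) := ⟨hx, hx0⟩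
        have := Nat.sInf_le hmem2
        omega
      have hub : ∀ x, 2 * m ≤ x → x ∈ S := by
        intro x hx
        by_contra hxc
        have := le_csSup hfin.bddAbove (hxc : x ∈ Sᶜ)
        omega
      classical
      set B := (Finset.Icc 1 (m-1)).filter (fun b => m + b ∈ S) with hBdef
      have hBsub : (B : Set ℕ) ⊆ Set.Icc 1 (m-1) := by
        intro b hb
        simp only [hBdef, Finset.coe_filter, Set.mem_setOf_eq, Finset.mem_Icc] at hb
        simpa [Set.mem_Icc] using hb.1
      have hSeq : fS m B = S := by
        ext x
        constructor
        · intro hx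
          rcases hx with (⟨b, hb, rfl⟩ | h) | h
          · simp only [hBdef, Finset.coe_filter, Set.mem_setOf_eq] at hb
            exact hb.2
          · rcases h with rfl | rfl
            · exact h0
            · exact hmmem.1
          · exact hub x h
        · intro hx
          by_cases hx0 : x = 0
          · exact hx0 ▸ Or.inl (Or.inr (Or.inl rfl))
          have hxm := hlb x hx hx0
          by_cases hxeq : x = m
          · exact hxeq ▸ Or.inl (Or.inr (Or.inr rfl))
          by_cases hx2 : 2 * m ≤ x
          · exact Or.inr hx2
          · have hxe : m + (x - m) = x := by omega
            refine Or.inl (Or.inl ⟨x - m, ?_, hxe⟩)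
            simp only [hBdef, Finset.coe_filter, Set.mem_setOf_eq, Finset.mem_Icc]
            exact ⟨⟨by omega, by omega⟩, by rwa [hxe]⟩
      have hBsubF : B ⊆ Finset.Icc 1 (m-1) := Finset.filter_subset _ _
      have hcard : B.card = 2 * m - g - 2 := by
        have hc := compl_fS m hm B hBsub
        rw [hSeq] at hc
        rw [hc, Set.ncard_coe_finset, card_gapF m hm B hBsubF] at hgen
        have := Finset.card_le_card hBsubF
        rw [Nat.card_Icc] at this
        omega
      exact ⟨B, ⟨hBsub, hcard⟩, hSeq⟩
  refine ⟨hbij, ?_⟩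
  have himg := hbij.image_eq
  rw [← himg, Set.ncard_image_of_injOn hbij.injOn]
  have hsrc : {B : Finset ℕ | (B : Set ℕ) ⊆ Set.Icc 1 (m - 1) ∧ B.card = 2 * m - g - 2}
      = ↑((Finset.Icc 1 (m-1)).powersetCard (2 * m - g - 2)) := by
    ext B
    simp only [Set.mem_setOf_eq, Finset.mem_coe,
      Finset.mem_powersetCard, ← Finset.coe_Icc, Finset.coe_subset]
  rw [hsrc, Set.ncard_coe_finset, Finset.card_powersetCard, Nat.card_Icc]
  congr 1
end

section
/- For any numerical semigroup $S$ of genus $g$ with multiplicity $m$ and Frobenius number $F$, we have $|2m - g - 1 - e_1(S)| \leq |F - 2m|$, where $e_1(S) = \#([m, 2m-1] \cap S)$. -/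
theorem stmt_9 (S : Set ℕ) (h0 : 0 ∈ S) (hadd : ∀ a ∈ S, ∀ b ∈ S, a + b ∈ S)
    (hfin : Sᶜ.Finite) (g m F : ℕ) (hg : g = Sᶜ.ncard) (hm : m = sInf (S \ {0}))
    (hF : F = sSup Sᶜ) :
    |2 * (m : ℤ) - g - 1 - (Set.Icc m (2 * m - 1) ∩ S).ncard| ≤ |(F : ℤ) - 2 * m| := by
  classical
  -- S \ {0} is nonempty
  have hSne : (S \ {0}).Nonempty := by
    have hinf : (Set.Ici 1 \ Sᶜ).Infinite := (Set.Ici_infinite (1 : ℕ)).diff hfin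
    obtain ⟨x, hx⟩ := hinf.nonempty
    obtain ⟨hx1, hx2⟩ := hx
    simp only [Set.mem_Ici] at hx1
    simp only [Set.mem_compl_iff, not_not] at hx2
    exact ⟨x, hx2, by simp; omega⟩
  have hmS : m ∈ S \ {0} := hm ▸ Nat.sInf_mem hSne
  have hm1 : 1 ≤ m := by
    rcases hmS with ⟨_, h⟩; simp at h; omega
  have hmem : m ∈ S := hmS.1
  have h2m : 2 * m ∈ S := by
    have := hadd m hmem m hmem; simpa [two_mul] using this
  have h_lt_m : ∀ x, x ≠ 0 → x < m → x ∉ S := by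
    intro x hx0 hxm hxS
    have : m ≤ x := hm ▸ Nat.sInf_le ⟨hxS, by simpa using hx0⟩
    omega
  have hF_ub : ∀ x, x ∉ S → x ≤ F := by
    intro x hx
    exact hF ▸ le_csSup hfin.bddAbove hx
  set Gf := hfin.toFinset with hGf
  have hg' : g = Gf.card := by rw [hg, Set.ncard_eq_toFinset_card _ hfin]
  -- identify e1 with a finset card
  have hIccIco : Set.Icc m (2 * m - 1) ∩ S =
      ↑((Finset.Ico m (2 * m)).filter (· ∈ S)) := by
    ext x
    simp [Set.mem_Icc, Finset.mem_Ico]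
    omega
  set e1 := ((Finset.Ico m (2 * m)).filter (· ∈ S)).card with he1
  have he1' : (Set.Icc m (2 * m - 1) ∩ S).ncard = e1 := by
    rw [hIccIco, Set.ncard_coe_finset]
  set cC := (Gf.filter (fun x => 2 * m ≤ x)).card with hcC
  -- partition of Ico m (2m)
  have c1 : e1 + ((Finset.Ico m (2 * m)).filter (fun x => ¬ x ∈ S)).card = m := by
    rw [he1, Finset.card_filter_add_card_filter_not, Nat.card_Ico]
    omega
  -- gaps below m
  have c2 : Gf.filter (fun x => x < m) = Finset.Ico 1 m := by
    ext x
    simp only [Finset.mem_filter, Set.Finite.mem_toFinset, Set.mem_compl_iff,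
      Finset.mem_Ico, hGf]
    constructor
    · rintro ⟨hxS, hxm⟩
      refine ⟨?_, hxm⟩
      rcases Nat.eq_zero_or_pos x with h | h
      · exact absurd (h ▸ h0) hxS
      · omega
    · rintro ⟨hx1, hxm⟩
      exact ⟨h_lt_m x (by omega) hxm, hxm⟩
  have c2' : (Gf.filter (fun x => x < m)).card = m - 1 := by
    rw [c2, Nat.card_Ico]
  -- gaps in [m, 2m)
  have c3 : Gf.filter (fun x => m ≤ x ∧ x < 2 * m) =
      (Finset.Ico m (2 * m)).filter (fun x => ¬ x ∈ S) := by
    ext x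
    simp only [Finset.mem_filter, Set.Finite.mem_toFinset, Set.mem_compl_iff,
      Finset.mem_Ico, hGf]
    tauto
  -- partition Gf
  have q1 : (Gf.filter (fun x => x < 2 * m)).card +
      (Gf.filter (fun x => ¬ x < 2 * m)).card = Gf.card :=
    Finset.card_filter_add_card_filter_not _
  have q2 : ((Gf.filter (fun x => x < 2 * m)).filter (fun x => x < m)).card +
      ((Gf.filter (fun x => x < 2 * m)).filter (fun x => ¬ x < m)).card =
      (Gf.filter (fun x => x < 2 * m)).card :=
    Finset.card_filter_add_card_filter_not _
  have e1q : (Gf.filter (fun x => x < 2 * m)).filter (fun x => x < m) =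
      Gf.filter (fun x => x < m) := by
    rw [Finset.filter_filter]
    apply Finset.filter_congr
    intro x _
    simp; omega
  have e2q : (Gf.filter (fun x => x < 2 * m)).filter (fun x => ¬ x < m) =
      Gf.filter (fun x => m ≤ x ∧ x < 2 * m) := by
    rw [Finset.filter_filter]
    apply Finset.filter_congr
    intro x _
    simp; omega
  have e3q : Gf.filter (fun x => ¬ x < 2 * m) = Gf.filter (fun x => 2 * m ≤ x) := by
    apply Finset.filter_congr
    intro x _
    simp
  rw [e1q, e2q] at q2
  rw [e3q] at q1
  rw [c3] at q2
  -- bound on cC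
  have hCsub : Gf.filter (fun x => 2 * m ≤ x) ⊆ Finset.Icc (2 * m + 1) F := by
    intro x hx
    simp only [Finset.mem_filter, Set.Finite.mem_toFinset, Set.mem_compl_iff, hGf] at hx
    obtain ⟨hxS, hx2m⟩ := hx
    have hxF := hF_ub x hxS
    have hxne : x ≠ 2 * m := fun h => hxS (h ▸ h2m)
    simp only [Finset.mem_Icc]
    omega
  have hCle : cC ≤ F - 2 * m := by
    have := Finset.card_le_card hCsub
    rw [Nat.card_Icc] at this
    omega
  -- key counting identity
  have key : g + e1 + 1 = 2 * m + cC := by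
    rw [hg']
    omega
  -- conclude
  rw [he1']
  have keyZ : (g : ℤ) + e1 + 1 = 2 * m + cC := by exact_mod_cast key
  have hlhs : 2 * (m : ℤ) - g - 1 - e1 = -(cC : ℤ) := by linarith
  rw [hlhs, abs_neg, abs_of_nonneg (by positivity : (0:ℤ) ≤ (cC : ℤ))]
  rcases le_or_gt (2 * m) F with hcase | hcase
  · have h1 : (cC : ℤ) ≤ (F : ℤ) - 2 * m := by omega
    exact h1.trans (le_abs_self _)
  · have h1 : cC = 0 := by omega
    rw [h1]
    simp
end

section
/- For any numerical semigroup $S$ of genus $g$ with multiplicity $m$ and Frobenius number $F$, letting $t_1(S) = \#(\mathcal{H}(S) \cap [F-m+1, F])$, we have $|g - (m - 1) - t_1(S)| \leq |F - 2m|$. -/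
theorem stmt_10 (S : Set ℕ) (h0 : 0 ∈ S) (hadd : ∀ a ∈ S, ∀ b ∈ S, a + b ∈ S)
    (hfin : Sᶜ.Finite) (g m F : ℕ) (hg : g = Sᶜ.ncard) (hm : m = sInf (S \ {0}))
    (hF : F = sSup Sᶜ) :
    |(g : ℤ) - ((m : ℤ) - 1) - (Sᶜ ∩ Set.Icc (F - m + 1) F).ncard| ≤ |(F : ℤ) - 2 * m| := by
  -- basic facts
  have hSinf : S.Infinite := by
    have := hfin.infinite_compl
    rwa [compl_compl] at this
  have hSne : (S \ {0}).Nonempty := (hSinf.diff (Set.finite_singleton 0)).nonempty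
  have hmS : m ∈ S \ {0} := hm ▸ Nat.sInf_mem hSne
  have hm1 : 1 ≤ m := Nat.one_le_iff_ne_zero.mpr hmS.2
  have hgap : ∀ k : ℕ, k ≠ 0 → k < m → k ∈ Sᶜ := by
    intro k hk0 hkm hkS
    exact Nat.notMem_of_lt_sInf (hm ▸ hkm) ((Set.mem_diff k).mpr ⟨hkS, hk0⟩)
  have hbdd : BddAbove Sᶜ := hfin.bddAbove
  have hHF : ∀ x ∈ Sᶜ, x ≤ F := fun x hx => hF ▸ le_csSup hbdd hx
  have hH1 : ∀ x ∈ Sᶜ, 1 ≤ x := by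
    intro x hx
    rcases Nat.eq_zero_or_pos x with h | h
    · exact absurd (h ▸ h0) hx
    · exact h
  set A : Set ℕ := Sᶜ ∩ Set.Icc 1 (F - m) with hA
  set B : Set ℕ := Sᶜ ∩ Set.Icc (F - m + 1) F with hB
  have hAfin : A.Finite := hfin.inter_of_left _
  have hBfin : B.Finite := hfin.inter_of_left _
  have hsplit : Sᶜ = A ∪ B := by
    ext x
    simp only [hA, hB, Set.mem_union, Set.mem_inter_iff, Set.mem_Icc]
    constructor
    · intro hx
      rcases le_or_gt x (F - m) with h | h
      · exact Or.inl ⟨hx, hH1 x hx, h⟩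
      · exact Or.inr ⟨hx, by omega, hHF x hx⟩
    · rintro (⟨hx, _⟩ | ⟨hx, _⟩) <;> exact hx
  have hdisjAB : Disjoint A B := by
    rw [Set.disjoint_left]
    rintro x ⟨_, _, h2⟩ ⟨_, h3, _⟩
    omega
  have hgeq : g = A.ncard + B.ncard := by
    rw [hg, hsplit, Set.ncard_union_eq hdisjAB hAfin hBfin]
  have hIccCard : ∀ a b : ℕ, (Set.Icc a b).ncard = b + 1 - a := by
    intro a b
    rw [← Finset.coe_Icc, Set.ncard_coe_finset, Nat.card_Icc]
  rcases le_or_gt (2 * m) F with hcase | hcase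
  · -- F ≥ 2m
    set C : Set ℕ := Sᶜ ∩ Set.Icc m (F - m) with hC
    have hCfin : C.Finite := hfin.inter_of_left _
    have hA2 : A = Set.Icc 1 (m - 1) ∪ C := by
      ext x
      simp only [hA, hC, Set.mem_union, Set.mem_inter_iff, Set.mem_Icc]
      constructor
      · rintro ⟨hx, h1, h2⟩
        rcases lt_or_ge x m with h | h
        · exact Or.inl ⟨h1, by omega⟩
        · exact Or.inr ⟨hx, h, h2⟩
      · rintro (⟨h1, h2⟩ | ⟨hx, h1, h2⟩)
        · exact ⟨hgap x (by omega) (by omega), h1, by omega⟩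
        · exact ⟨hx, by omega, h2⟩
    have hdisj2 : Disjoint (Set.Icc 1 (m - 1)) C := by
      rw [Set.disjoint_left]
      rintro x ⟨_, h2⟩ ⟨_, h3, _⟩
      omega
    have hAcard : A.ncard = (m - 1) + C.ncard := by
      rw [hA2, Set.ncard_union_eq hdisj2 (Set.finite_Icc _ _) hCfin, hIccCard]
      omega
    have hCbound : C.ncard ≤ F - 2 * m := by
      have hsub : C ⊆ Set.Icc (m + 1) (F - m) := by
        rintro x ⟨hx, h1, h2⟩
        have : x ≠ m := by
          intro h
          exact hx (h ▸ hmS.1)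
        exact Set.mem_Icc.mpr ⟨by omega, h2⟩
      have := Set.ncard_le_ncard hsub (Set.finite_Icc _ _)
      rw [hIccCard] at this
      omega
    rcases abs_cases ((g : ℤ) - ((m : ℤ) - 1) - (B.ncard : ℤ)) with ⟨h1, h2⟩ | ⟨h1, h2⟩ <;>
      rcases abs_cases ((F : ℤ) - 2 * m) with ⟨h3, h4⟩ | ⟨h3, h4⟩ <;>
      rw [h1, h3] <;> omega
  · -- F < 2m
    have hA3 : A = Set.Icc 1 (F - m) := by
      ext x
      simp only [hA, Set.mem_inter_iff, Set.mem_Icc]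
      constructor
      · rintro ⟨_, h⟩
        exact h
      · rintro ⟨h1, h2⟩
        exact ⟨hgap x (by omega) (by omega), h1, h2⟩
    have hAcard : A.ncard = F - m := by
      rw [hA3, hIccCard]
      omega
    rcases abs_cases ((g : ℤ) - ((m : ℤ) - 1) - (B.ncard : ℤ)) with ⟨h1, h2⟩ | ⟨h1, h2⟩ <;>
      rcases abs_cases ((F : ℤ) - 2 * m) with ⟨h3, h4⟩ | ⟨h3, h4⟩ <;>
      rw [h1, h3] <;> omega
end

section
/- Let $m \geq 2$, and let $(x_1,\dots,x_{m-1})$ be the Kunz coordinate vector of a numerical semigroup $S$ with multiplicity $m$ and genus $g$. If $2g < 3m+2$, then $x_i \in \{1,2,3\}$ for every $i \in [1, m-1]$. -/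
/-!
Write `a_j = x_j m + j` for the Apéry elements. If `j + k = i + c m` with `c ∈ {0, 1}`, then
`a_j + a_k = (x_j + x_k + c) m + i ∈ S`, so `x_i ≤ x_j + x_k + 1`. Pairing each residue
`j ≠ i` with `k ≡ i - j (mod m)` gives `(m - 2)(x_i - 1) ≤ 2 ∑_{j ≠ i} x_j`, while the gaps
`t m + j` with `t < x_j` show `∑_j x_j ≤ g`. If `x_i ≥ 4` these combine to `2g ≥ 3m + 2`.
-/

open Finset

theorem Finset.card_mul_le_two_mul_sum_of_involution {ι : Type*} {D : Finset ι} (f : ι → ℕ)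
    (σ : ι → ι) (hσ : ∀ j ∈ D, σ j ∈ D) (hσσ : ∀ j ∈ D, σ (σ j) = j) {c : ℕ}
    (hc : ∀ j ∈ D, c ≤ f j + f (σ j)) :
    #D * c ≤ 2 * ∑ j ∈ D, f j := by
  have hperm : ∑ j ∈ D, f (σ j) = ∑ j ∈ D, f j :=
    sum_nbij' σ σ hσ hσ hσσ hσσ fun _ _ => rfl
  calc #D * c = ∑ _ ∈ D, c := by rw [sum_const, smul_eq_mul]
    _ ≤ ∑ j ∈ D, (f j + f (σ j)) := sum_le_sum hc
    _ = 2 * ∑ j ∈ D, f j := by rw [sum_add_distrib, hperm, two_mul]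

section KunzCoordinates

variable {S : Set ℕ} {m : ℕ}

theorem add_mul_mem_of_add_closed (hadd : ∀ a ∈ S, ∀ b ∈ S, a + b ∈ S) (hm : m ∈ S) {s : ℕ}
    (hs : s ∈ S) (k : ℕ) : s + k * m ∈ S := by
  induction k with
  | zero => simpa using hs
  | succ k ih => simpa [add_mul, ← add_assoc] using hadd _ ih m hm

theorem mul_add_mem_iff_le (hadd : ∀ a ∈ S, ∀ b ∈ S, a + b ∈ S) (hm : m ∈ S) {j x : ℕ}
    (hx : x * m + j ∈ S ∧ (x - 1) * m + j ∉ S) (t : ℕ) :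
    t * m + j ∈ S ↔ x ≤ t := by
  obtain ⟨hin, hout⟩ := hx
  constructor
  · intro ht
    by_contra! hlt
    have h := add_mul_mem_of_add_closed hadd hm ht (x - 1 - t)
    rw [add_right_comm, ← add_mul, show t + (x - 1 - t) = x - 1 by omega] at h
    exact hout h
  · intro ht
    have h := add_mul_mem_of_add_closed hadd hm hin (t - x)
    rwa [add_right_comm, ← add_mul, show x + (t - x) = t by omega] at h

theorem kunz_le_add_add (hadd : ∀ a ∈ S, ∀ b ∈ S, a + b ∈ S) (hm : m ∈ S) {x : ℕ → ℕ}
    {i j k c : ℕ} (hxi : x i * m + i ∈ S ∧ (x i - 1) * m + i ∉ S) (hxj : x j * m + j ∈ S)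
    (hxk : x k * m + k ∈ S) (hjk : j + k = i + c * m) :
    x i ≤ x j + x k + c := by
  have hsum : (x j + x k + c) * m + i = x j * m + j + (x k * m + k) := by
    linear_combination (exp := 1) hjk.symm
  rw [← mul_add_mem_iff_le hadd hm hxi, hsum]
  exact hadd _ hxj _ hxk

theorem sum_le_ncard_compl (hfin : Sᶜ.Finite) {J : Finset ℕ} (hJ : ∀ j ∈ J, j < m)
    {x : ℕ → ℕ} (hgap : ∀ j ∈ J, ∀ t < x j, t * m + j ∉ S) :
    ∑ j ∈ J, x j ≤ Sᶜ.ncard := by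
  have hcard : ∑ j ∈ J, x j = #(J.sigma fun j => range (x j)) := by simp [card_sigma]
  rw [hcard, ← Set.ncard_coe_finset]
  refine Set.ncard_le_ncard_of_injOn (fun p => p.2 * m + p.1) ?_ ?_ hfin
  · rintro ⟨j, t⟩ hp
    simp only [coe_sigma, Set.mem_sigma_iff, mem_coe, mem_range] at hp
    exact hgap j hp.1 t hp.2
  · rintro ⟨j, t⟩ hp ⟨j', t'⟩ hp' heq
    simp only [coe_sigma, Set.mem_sigma_iff, mem_coe, mem_range] at hp hp' heq
    have hj : j = j' := by
      have := congrArg (· % m) heq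
      simpa [Nat.mul_add_mod, Nat.mod_eq_of_lt (hJ j hp.1), Nat.mod_eq_of_lt (hJ j' hp'.1),
        mul_comm] using this
    subst hj
    rw [Nat.eq_of_mul_eq_mul_right (Nat.zero_lt_of_lt (hJ j hp.1)) (Nat.add_right_cancel heq)]

def residueComplement (m i j : ℕ) : ℕ := if j < i then i - j else i + m - j

theorem residueComplement_mem {i j : ℕ} (hi : i ∈ Icc 1 (m - 1))
    (hj : j ∈ (Icc 1 (m - 1)).erase i) : residueComplement m i j ∈ (Icc 1 (m - 1)).erase i := by
  simp only [mem_erase, mem_Icc] at hi hj ⊢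
  unfold residueComplement
  split <;> omega

theorem residueComplement_residueComplement {i j : ℕ} (hi : i ∈ Icc 1 (m - 1))
    (hj : j ∈ (Icc 1 (m - 1)).erase i) : residueComplement m i (residueComplement m i j) = j := by
  simp only [mem_erase, mem_Icc] at hi hj
  unfold residueComplement
  split <;> split <;> omega

theorem add_residueComplement {i j : ℕ} (hj : j ∈ (Icc 1 (m - 1)).erase i) :
    ∃ c ≤ 1, j + residueComplement m i j = i + c * m := by
  simp only [mem_erase, mem_Icc] at hj
  unfold residueComplement
  split
  · exact ⟨0, zero_le_one, by omega⟩
  · exact ⟨1, le_rfl, by omega⟩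

theorem sub_one_mul_le_two_mul_sum_erase (hadd : ∀ a ∈ S, ∀ b ∈ S, a + b ∈ S) (hm : m ∈ S)
    {x : ℕ → ℕ} (hx : ∀ i, 1 ≤ i → i ≤ m - 1 → x i * m + i ∈ S ∧ (x i - 1) * m + i ∉ S)
    {i : ℕ} (hi : i ∈ Icc 1 (m - 1)) :
    (m - 2) * (x i - 1) ≤ 2 * ∑ j ∈ (Icc 1 (m - 1)).erase i, x j := by
  have hcard : #((Icc 1 (m - 1)).erase i) = m - 2 := by
    rw [card_erase_of_mem hi, Nat.card_Icc]
    omega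
  have hxmem : ∀ j ∈ (Icc 1 (m - 1)).erase i, x j * m + j ∈ S := fun j hj => by
    obtain ⟨-, hj⟩ := mem_erase.1 hj
    exact (hx j (mem_Icc.1 hj).1 (mem_Icc.1 hj).2).1
  rw [← hcard]
  refine card_mul_le_two_mul_sum_of_involution x (residueComplement m i)
    (fun j => residueComplement_mem hi) (fun j => residueComplement_residueComplement hi)
    fun j hj => ?_
  obtain ⟨c, hc, hjk⟩ := add_residueComplement hj
  have := kunz_le_add_add hadd hm (hx i (mem_Icc.1 hi).1 (mem_Icc.1 hi).2) (hxmem j hj)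
    (hxmem _ (residueComplement_mem hi hj)) hjk
  omega

end KunzCoordinates

theorem stmt_15_general (S : Set ℕ) (hadd : ∀ a ∈ S, ∀ b ∈ S, a + b ∈ S)
    (hfin : Sᶜ.Finite) (m g : ℕ)
    (hm : sInf (S \ {0}) = m) (hg : Sᶜ.ncard = g)
    (x : ℕ → ℕ)
    (hx : ∀ i, 1 ≤ i → i ≤ m - 1 → x i * m + i ∈ S ∧ (x i - 1) * m + i ∉ S)
    (h : 2 * g < 3 * m + 2) :
    ∀ i, 1 ≤ i → i ≤ m - 1 → x i ∈ ({1, 2, 3} : Set ℕ) := by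
  intro i hi1 hi2
  have hi : i ∈ Icc 1 (m - 1) := mem_Icc.2 ⟨hi1, hi2⟩
  have hmS : m ∈ S := by
    have hS : S.Infinite := compl_compl S ▸ hfin.infinite_compl
    exact hm ▸ (Nat.sInf_mem (hS.sdiff (Set.finite_singleton 0)).nonempty).1
  have hxi : x i ≠ 0 := fun hzero => by simpa [hzero] using hx i hi1 hi2
  have hgenus : ∑ j ∈ Icc 1 (m - 1), x j ≤ g :=
    hg ▸ sum_le_ncard_compl (m := m) hfin (fun j hj => by rw [mem_Icc] at hj; omega)
      fun j hj t ht hmem => by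
        rw [mem_Icc] at hj
        rw [mul_add_mem_iff_le hadd hmS (hx j hj.1 hj.2)] at hmem
        omega
  rw [← add_sum_erase _ _ hi] at hgenus
  have hpair := sub_one_mul_le_two_mul_sum_erase hadd hmS hx hi
  by_contra hx123
  have hxi4 : 4 ≤ x i := by simp only [Set.mem_insert_iff, Set.mem_singleton_iff] at hx123; omega
  have : (m - 2) * 3 ≤ (m - 2) * (x i - 1) := Nat.mul_le_mul_left _ (by omega)
  omega

theorem stmt_15 (S : Set ℕ) (h0 : 0 ∈ S) (hadd : ∀ a ∈ S, ∀ b ∈ S, a + b ∈ S)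
    (hfin : Sᶜ.Finite) (m g : ℕ) (hm2 : 2 ≤ m)
    (hm : sInf (S \ {0}) = m) (hg : Sᶜ.ncard = g)
    (x : ℕ → ℕ)
    (hx : ∀ i, 1 ≤ i → i ≤ m - 1 → x i * m + i ∈ S ∧ (x i - 1) * m + i ∉ S)
    (h : 2 * g < 3 * m + 2) :
    ∀ i, 1 ≤ i → i ≤ m - 1 → x i ∈ ({1, 2, 3} : Set ℕ) :=
  stmt_15_general S hadd hfin m g hm hg x hx h
end

section
/- Let $S$ be a numerical semigroup with multiplicity $m$, genus $g$, and Kunz coordinate vector $(k_1,\dots,k_{m-1})$. If $k_i = 3$ for some $i \in [1,m-1]$, then $g \geq m + 1 + \lceil (i-1)/2 \rceil$. -/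
/-!
Every residue `j ∈ [1, m - 1]` contributes the `k_j` gaps `l m + j` with `l < k_j`, so
`g ≥ ∑ k_j`. All `k_j ≥ 1`, and for `1 ≤ j < i` we have `k_j + k_{i-j} ≥ k_i = 3`; pairing `j` with
`i - j` gives `∑_{j < i} k_j ≥ 3 (i - 1) / 2`, and the residues `j > i` contribute at least
`m - 1 - i`. Adding `k_i = 3` yields `g ≥ m + 1 + (i - 1) / 2`.
-/

open Finset

namespace NumericalSemigroup

section

variable {S : Set ℕ} (hadd : ∀ a ∈ S, ∀ b ∈ S, a + b ∈ S) {m : ℕ} (hmS : m ∈ S)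
include hadd hmS

theorem mul_add_mem_of_mem {a : ℕ} (ha : a ∈ S) (t : ℕ) : t * m + a ∈ S := by
  induction t with
  | zero => simpa using ha
  | succ t ih => simpa [add_mul, add_comm, add_left_comm] using hadd m hmS _ ih

theorem mul_add_notMem_of_lt {k j l : ℕ} (hk : (k - 1) * m + j ∉ S) (hl : l < k) :
    l * m + j ∉ S := by
  intro h
  apply hk
  have : (k - 1) * m + j = (k - 1 - l) * m + (l * m + j) := by
    rw [← add_assoc, ← add_mul, Nat.sub_add_cancel (by omega)]
  exact this ▸ mul_add_mem_of_mem hadd hmS h _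

theorem le_add_of_mul_add_mem {a b c j j' : ℕ} (ha : a * m + j ∈ S) (hb : b * m + j' ∈ S)
    (hc : (c - 1) * m + (j + j') ∉ S) : c ≤ a + b := by
  by_contra! h
  refine mul_add_notMem_of_lt hadd hmS hc h ?_
  have := hadd _ ha _ hb
  rwa [show a * m + j + (b * m + j') = (a + b) * m + (j + j') by ring] at this

end

theorem one_le_of_mul_add_mem {S : Set ℕ} {m k j : ℕ} (hk : k * m + j ∈ S)
    (hk' : (k - 1) * m + j ∉ S) : 1 ≤ k := by
  by_contra! h
  simp_all [Nat.lt_one_iff.mp h]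

theorem eq_and_eq_of_mul_add_eq {m j j' l l' : ℕ} (hj : j < m) (hj' : j' < m)
    (h : l * m + j = l' * m + j') : j = j' ∧ l = l' := by
  have hm : 0 < m := by omega
  have hmod := congrArg (· % m) h
  have hdiv := congrArg (· / m) h
  simp only [Nat.add_comm (_ * m), Nat.add_mul_mod_self_right, Nat.mod_eq_of_lt hj,
    Nat.mod_eq_of_lt hj', Nat.add_mul_div_right _ _ hm, Nat.div_eq_of_lt hj,
    Nat.div_eq_of_lt hj'] at hmod hdiv
  exact ⟨hmod, by simpa using hdiv⟩

theorem sum_le_ncard_compl {S : Set ℕ} (hfin : Sᶜ.Finite) {m : ℕ} (x : ℕ → ℕ)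
    (hgap : ∀ j ∈ Ico 1 m, ∀ l < x j, l * m + j ∉ S) :
    ∑ j ∈ Ico 1 m, x j ≤ Sᶜ.ncard := by
  have key : ((Ico 1 m).sigma fun j => range (x j)).card ≤ hfin.toFinset.card := by
    refine card_le_card_of_injOn (fun p => p.2 * m + p.1) ?_ ?_
    · rintro ⟨j, l⟩ hp
      simp only [coe_sigma, Set.mem_sigma_iff, coe_Ico, Set.mem_Ico, coe_range,
        Set.mem_Iio] at hp
      simpa using hgap j (by simpa using hp.1) l hp.2
    · rintro ⟨j, l⟩ hp ⟨j', l'⟩ hp' h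
      simp only [coe_sigma, Set.mem_sigma_iff, coe_Ico, Set.mem_Ico] at hp hp'
      obtain ⟨rfl, rfl⟩ := eq_and_eq_of_mul_add_eq hp.1.2 hp'.1.2 h
      rfl
  simpa [Set.ncard_eq_toFinset_card _ hfin] using key

theorem mul_le_two_mul_sum_of_le_add_reflect (x : ℕ → ℕ) {c i : ℕ}
    (h : ∀ j ∈ Ico 1 i, c ≤ x j + x (i - j)) : c * (i - 1) ≤ 2 * ∑ j ∈ Ico 1 i, x j := by
  have hreflect : ∑ j ∈ Ico 1 i, x (i - j) = ∑ j ∈ Ico 1 i, x j := by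
    rw [sum_Ico_reflect _ _ (Nat.le_succ i)]
    simp
  calc c * (i - 1) = (Ico 1 i).card • c := by simp [mul_comm]
    _ ≤ ∑ j ∈ Ico 1 i, (x j + x (i - j)) := card_nsmul_le_sum _ _ _ h
    _ = 2 * ∑ j ∈ Ico 1 i, x j := by rw [sum_add_distrib, hreflect, two_mul]

theorem two_mul_succ_add_pred_le_two_mul_sum (x : ℕ → ℕ) {m i : ℕ} (hi : i ∈ Ico 1 m)
    (hpos : ∀ j ∈ Ico 1 m, 1 ≤ x j) (hsup : ∀ j ∈ Ico 1 i, 3 ≤ x j + x (i - j)) (hxi : x i = 3) :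
    2 * (m + 1) + (i - 1) ≤ 2 * ∑ j ∈ Ico 1 m, x j := by
  rw [mem_Ico] at hi
  have hlow := mul_le_two_mul_sum_of_le_add_reflect x hsup
  have hhigh : m - (i + 1) ≤ ∑ j ∈ Ico (i + 1) m, x j := by
    simpa using card_nsmul_le_sum (Ico (i + 1) m) x 1 fun j hj => hpos j (by simp at hj ⊢; omega)
  rw [← sum_Ico_consecutive x hi.1 hi.2.le, sum_eq_sum_Ico_succ_bot hi.2, hxi]
  omega

end NumericalSemigroup

open NumericalSemigroup

theorem stmt_16_general (S : Set ℕ) (hadd : ∀ a ∈ S, ∀ b ∈ S, a + b ∈ S)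
    (hfin : Sᶜ.Finite) (m g : ℕ)
    (hm : sInf (S \ {0}) = m) (hg : Sᶜ.ncard = g)
    (x : ℕ → ℕ)
    (hx : ∀ i, 1 ≤ i → i ≤ m - 1 → x i * m + i ∈ S ∧ (x i - 1) * m + i ∉ S)
    (i : ℕ) (hi1 : 1 ≤ i) (hi2 : i ≤ m - 1) (hxi : x i = 3) :
    (m : ℤ) + 1 + ⌈((i : ℚ) - 1) / 2⌉ ≤ (g : ℤ) := by
  have hmS : m ∈ S := (hm ▸ Nat.sInf_mem (Nat.nonempty_of_pos_sInf (by omega))).1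
  have hapery : ∀ j ∈ Ico 1 m, x j * m + j ∈ S ∧ (x j - 1) * m + j ∉ S := fun j hj =>
    hx j (mem_Ico.mp hj).1 (by have := (mem_Ico.mp hj).2; omega)
  have hpos : ∀ j ∈ Ico 1 m, 1 ≤ x j := fun j hj =>
    one_le_of_mul_add_mem (hapery j hj).1 (hapery j hj).2
  have hsup : ∀ j ∈ Ico 1 i, 3 ≤ x j + x (i - j) := by
    intro j hj
    rw [mem_Ico] at hj
    refine le_add_of_mul_add_mem hadd hmS (hapery j (mem_Ico.mpr ⟨by omega, by omega⟩)).1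
      (hapery (i - j) (mem_Ico.mpr ⟨by omega, by omega⟩)).1 ?_
    rw [Nat.add_sub_cancel' hj.2.le, ← hxi]
    exact (hapery i (mem_Ico.mpr ⟨by omega, by omega⟩)).2
  have hsum : ∑ j ∈ Ico 1 m, x j ≤ g :=
    hg ▸ sum_le_ncard_compl hfin x fun j hj _ hl => mul_add_notMem_of_lt hadd hmS (hapery j hj).2 hl
  have hbound := two_mul_succ_add_pred_le_two_mul_sum x (mem_Ico.mpr ⟨by omega, by omega⟩) hpos hsup hxi
  rw [← le_sub_iff_add_le', Int.ceil_le]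
  have : 2 * (m + 1) + (i - 1) ≤ 2 * g := by omega
  qify [hi1] at this
  push_cast
  linarith

theorem stmt_16 (S : Set ℕ) (h0 : 0 ∈ S) (hadd : ∀ a ∈ S, ∀ b ∈ S, a + b ∈ S)
    (hfin : Sᶜ.Finite) (m g : ℕ) (hm2 : 2 ≤ m)
    (hm : sInf (S \ {0}) = m) (hg : Sᶜ.ncard = g)
    (x : ℕ → ℕ)
    (hx : ∀ i, 1 ≤ i → i ≤ m - 1 → x i * m + i ∈ S ∧ (x i - 1) * m + i ∉ S)
    (i : ℕ) (hi1 : 1 ≤ i) (hi2 : i ≤ m - 1) (hxi : x i = 3) :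
    (m : ℤ) + 1 + ⌈((i : ℚ) - 1) / 2⌉ ≤ (g : ℤ) :=
  stmt_16_general S hadd hfin m g hm hg x hx i hi1 hi2 hxi
end

section
/- Let $S$ be a numerical semigroup of genus $g$ with multiplicity $m = g - k_1$ where $g \geq 3k_1 + 2$ and $k_1 \geq -1$, and Kunz coordinate vector $(x_1,\dots,x_{m-1})$. Then the embedding dimension satisfies $e(S) = g - 2k_1 - 1 + a + b - c$, where, setting $\overline{x} = (x_1,\dots,x_{2k_1+1})$: $a = \#\{i \leq 2k_1+1 : x_i = 2\}$, $b = \#\{i \leq 2k_1+1 : x_i = 3\}$, and $c = \#\{i \leq 2k_1+1 : \exists j_1, j_2 \leq 2k_1+1, j_1 + j_2 = i, (x_{j_1}, x_{j_2}, x_i) = (1,1,2)\}$. -/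
/-!
Write `w i = x i * m + i` for the nonzero elements of the Apéry set of the multiplicity `m`. The
minimal generators are `m` and the `w i` that are not of the form `w j + w k`; in coordinates,
`w i = w j + w k` means `x i = x j + x k` with `j + k = i`, or `x i = x j + x k + 1` with
`j + k = m + i`.

Pairing `j` with `i - j` and with `m + i - j` and summing the Kunz inequalities bounds `2K` from
below, where `K = ∑ (x j - 1) = g - (m - 1) = k₁ + 1`. As `2K ≤ m`, every coordinate is at most `3`,
every `i` with `x i = 3` is decomposable and satisfies `i + 3 ≤ 2K`, and every indecomposable `i`
with `x i = 2` satisfies `i < 2K`; such an `i` is decomposable exactly when it is the sum of two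
indices with coordinate `1`. Counting the coordinates by value gives the formula.
-/

lemma Nat.isLeast_of_sInf_eq {s : Set ℕ} {m : ℕ} (h : sInf s = m) (hm : m ≠ 0) :
    IsLeast s m := by
  have hs : s.Nonempty :=
    Set.nonempty_iff_ne_empty.2 fun he => hm (h ▸ Nat.sInf_eq_zero.2 (.inr he))
  exact h ▸ isLeast_csInf hs

lemma Nat.eq_and_eq_of_mul_add_eq {m a b r s : ℕ} (hr : r < m) (hs : s < m)
    (h : a * m + r = b * m + s) : a = b ∧ r = s := by
  have hm : 0 < m := by omega
  have hdiv := congrArg (· / m) h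
  have hmod := congrArg (· % m) h
  simp only [mul_comm _ m, Nat.mul_add_div hm, Nat.mul_add_mod, Nat.div_eq_of_lt hr,
    Nat.div_eq_of_lt hs, Nat.mod_eq_of_lt hr, Nat.mod_eq_of_lt hs] at hdiv hmod
  omega

section

open Finset

lemma two_mul_sum_Ico_eq (y : ℕ → ℕ) {i m : ℕ} (hi : 0 < i) (him : i < m) :
    2 * ∑ j ∈ Ico 1 m, y j = ∑ j ∈ Ico 1 i, (y j + y (i - j)) + 2 * y i
      + ∑ j ∈ Ico (i + 1) m, (y j + y (m + i - j)) := by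
  have hleft : ∑ j ∈ Ico 1 i, y (i - j) = ∑ j ∈ Ico 1 i, y j := by
    rw [sum_Ico_reflect y 1 (Nat.le_succ i)]
    congr 2; omega
  have hright : ∑ j ∈ Ico (i + 1) m, y (m + i - j) = ∑ j ∈ Ico (i + 1) m, y j := by
    rw [sum_Ico_reflect y (i + 1) (by omega : m ≤ m + i + 1)]
    congr 2 <;> omega
  rw [sum_add_distrib, sum_add_distrib, hleft, hright,
    ← sum_Ico_consecutive y hi him.le, sum_eq_sum_Ico_succ_bot him]
  ring

lemma sum_Ico_pair_bound (y : ℕ → ℕ) {i m c₁ c₂ : ℕ} (hi : 0 < i) (him : i < m)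
    (h₁ : ∀ j ∈ Ico 1 i, c₁ ≤ y j + y (i - j))
    (h₂ : ∀ j ∈ Ico (i + 1) m, c₂ ≤ y j + y (m + i - j)) :
    c₁ * (i - 1) + 2 * y i + c₂ * (m - 1 - i) ≤ 2 * ∑ j ∈ Ico 1 m, y j := by
  have hs₁ := card_nsmul_le_sum _ _ _ h₁
  have hs₂ := card_nsmul_le_sum _ _ _ h₂
  simp only [Nat.card_Ico, smul_eq_mul] at hs₁ hs₂
  rw [two_mul_sum_Ico_eq y hi him, mul_comm c₁, mul_comm c₂,
    show m - 1 - i = m - (i + 1) by omega]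
  omega

lemma card_eq_card_filter_eq_one_add {ι : Type*} (s : Finset ι) (f : ι → ℕ)
    (hf : ∀ i ∈ s, 1 ≤ f i ∧ f i ≤ 3) :
    #s = #{i ∈ s | f i = 1} + #{i ∈ s | f i = 2} + #{i ∈ s | f i = 3} := by
  simp only [card_filter, card_eq_sum_ones s, ← sum_add_distrib]
  refine sum_congr rfl fun i hi => ?_
  have := hf i hi
  split_ifs <;> omega

lemma sum_sub_one_eq_card_filter_eq_two_add {ι : Type*} (s : Finset ι) (f : ι → ℕ)
    (hf : ∀ i ∈ s, 1 ≤ f i ∧ f i ≤ 3) :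
    ∑ i ∈ s, (f i - 1) = #{i ∈ s | f i = 2} + 2 * #{i ∈ s | f i = 3} := by
  simp only [card_filter, mul_sum, ← sum_add_distrib]
  refine sum_congr rfl fun i hi => ?_
  have := hf i hi
  split_ifs <;> omega

lemma ncard_setOf_le_lt (a b : ℕ) (p : ℕ → Prop) [DecidablePred p] :
    {i | a ≤ i ∧ i < b ∧ p i}.ncard = #{i ∈ Ico a b | p i} := by
  rw [← Set.ncard_coe_finset]
  congr 1
  ext i
  simp [and_assoc]

end

namespace NumericalSemigroup

open Finset

def minGenerators (S : Set ℕ) : Set ℕ :=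
  (S \ {0}) \ {y | ∃ a ∈ S \ {0}, ∃ b ∈ S \ {0}, y = a + b}

def IsKunzCoords (S : AddSubmonoid ℕ) (m : ℕ) (x : ℕ → ℕ) : Prop :=
  ∀ r, 0 < r → r < m → ∀ q, q * m + r ∈ S ↔ x r ≤ q

/-- The Apéry element `x i * m + i` is the sum of two nonzero Apéry elements. -/
def IsDecomposable (m : ℕ) (x : ℕ → ℕ) (i : ℕ) : Prop :=
  ∃ j k, (0 < j ∧ j < m) ∧ (0 < k ∧ k < m) ∧
    (j + k = i ∧ x j + x k = x i ∨ j + k = m + i ∧ x j + x k + 1 = x i)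

variable {S : AddSubmonoid ℕ} {m : ℕ} {x : ℕ → ℕ}

lemma mul_mem (hm : m ∈ S) (q : ℕ) : q * m ∈ S := by
  simpa using S.nsmul_mem hm q

lemma mem_of_mod_eq_zero (hm : m ∈ S) {n : ℕ} (hn : n % m = 0) : n ∈ S := by
  rw [← Nat.div_mul_cancel (Nat.dvd_of_mod_eq_zero hn)]
  exact mul_mem hm _

lemma isKunzCoords_of_forall (hm : m ∈ S)
    (hx : ∀ i, 1 ≤ i → i ≤ m - 1 → x i * m + i ∈ S ∧ (x i - 1) * m + i ∉ S) :
    IsKunzCoords S m x := by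
  intro r hr hrm q
  obtain ⟨hin, hout⟩ := hx r hr (by omega)
  constructor
  · intro hq
    by_contra! hlt
    have hle := Nat.mul_le_mul_right m (Nat.le_sub_one_of_lt hlt)
    have h := S.add_mem hq (mul_mem hm (x r - 1 - q))
    rw [Nat.sub_mul (x r - 1) q] at h
    exact hout (by convert h using 1; omega)
  · intro hq
    have hle := Nat.mul_le_mul_right m hq
    have h := S.add_mem hin (mul_mem hm (q - x r))
    rw [Nat.sub_mul] at h
    convert h using 1; omega

lemma isDecomposable_iff {i : ℕ} (him : i < m) :
    IsDecomposable m x i ↔ ∃ j k, (0 < j ∧ j < m) ∧ (0 < k ∧ k < m) ∧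
      x j * m + j + (x k * m + k) = x i * m + i := by
  refine ⟨fun ⟨j, k, hj, hk, h⟩ => ⟨j, k, hj, hk, ?_⟩, fun ⟨j, k, hj, hk, h⟩ => ⟨j, k, hj, hk, ?_⟩⟩
  · rcases h with ⟨hjk, hx⟩ | ⟨hjk, hx⟩
    · rw [← hx, ← hjk]; ring
    · rw [← hx, add_mul, add_mul, one_mul]; omega
  · by_cases hjk : j + k < m
    · have := Nat.eq_and_eq_of_mul_add_eq (a := x j + x k) (b := x i) hjk him (by rw [← h]; ring)
      omega
    · have := Nat.eq_and_eq_of_mul_add_eq (a := x j + x k + 1) (b := x i) (r := j + k - m)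
        (by omega) him (by rw [← h, add_mul, add_mul, one_mul]; omega)
      omega

lemma self_mem_minGenerators (hm : IsLeast (↑S \ {0}) m) : m ∈ minGenerators S := by
  refine ⟨hm.1, ?_⟩
  rintro ⟨a, ha, b, hb, hab⟩
  have := hm.2 ha
  have := hm.2 hb
  have : m ≠ 0 := hm.1.2
  omega

namespace IsKunzCoords

variable (hx : IsKunzCoords S m x)
include hx

lemma apery_mem {r : ℕ} (hr : 0 < r) (hrm : r < m) : x r * m + r ∈ S :=
  (hx r hr hrm _).2 le_rfl

lemma one_le (hm : IsLeast (↑S \ {0}) m) {r : ℕ} (hr : 0 < r) (hrm : r < m) : 1 ≤ x r := by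
  by_contra! h0
  have hrS : r ∈ S := by simpa [Nat.lt_one_iff.1 h0] using hx.apery_mem hr hrm
  have := hm.2 ⟨hrS, hr.ne'⟩
  omega

lemma apery_le {n r : ℕ} (hr : 0 < r) (hrm : r < m) (hnr : n % m = r) (hn : n ∈ S) :
    x r * m + r ≤ n := by
  have hdiv : n / m * m + r = n := hnr ▸ Nat.div_add_mod' n m
  have := Nat.mul_le_mul_right m ((hx r hr hrm _).1 (hdiv ▸ hn))
  omega

lemma le_add {j k : ℕ} (hj : 0 < j) (hk : 0 < k) (hjk : j + k < m) :
    x (j + k) ≤ x j + x k := by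
  have h := S.add_mem (hx.apery_mem hj (by omega)) (hx.apery_mem hk (by omega))
  rw [show x j * m + j + (x k * m + k) = (x j + x k) * m + (j + k) by ring] at h
  exact (hx _ (by omega) hjk _).1 h

lemma le_add_add_one {i j k : ℕ} (hi : 0 < i) (him : i < m) (hjm : j < m) (hkm : k < m)
    (hjk : j + k = m + i) : x i ≤ x j + x k + 1 := by
  have h := S.add_mem (hx.apery_mem (r := j) (by omega) hjm) (hx.apery_mem (by omega) hkm)
  rw [show x j * m + j + (x k * m + k) = (x j + x k + 1) * m + i by
    rw [add_mul, add_mul, one_mul]; omega] at h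
  exact (hx _ hi him _).1 h

lemma sum_eq_sum_sub_one_add (hm : IsLeast (↑S \ {0}) m) :
    ∑ r ∈ Ico 1 m, x r = ∑ r ∈ Ico 1 m, (x r - 1) + (m - 1) := by
  have hsum : ∑ r ∈ Ico 1 m, x r = ∑ r ∈ Ico 1 m, (x r - 1 + 1) :=
    sum_congr rfl fun r hr => by have := hx.one_le hm (mem_Ico.1 hr).1 (mem_Ico.1 hr).2; omega
  rw [hsum, sum_add_distrib, sum_const, Nat.card_Ico, smul_eq_mul, mul_one]

lemma ncard_compl (hm : IsLeast (↑S \ {0}) m) :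
    (↑S : Set ℕ)ᶜ.ncard = ∑ r ∈ Ico 1 m, x r := by
  have hmpos : 0 < m := Nat.pos_of_ne_zero hm.1.2
  have hgaps : (↑S : Set ℕ)ᶜ = ↑(((Ico 1 m).sigma fun r => range (x r)).image
      fun p => p.2 * m + p.1) := by
    ext n
    simp only [Set.mem_compl_iff, SetLike.mem_coe, coe_image, coe_sigma, Set.mem_image,
      Set.mem_sigma_iff, mem_Ico, mem_range, Sigma.exists]
    constructor
    · intro hn
      have hr : 0 < n % m := Nat.pos_of_ne_zero fun h => hn (mem_of_mod_eq_zero hm.1.1 h)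
      have hdiv := Nat.div_add_mod' n m
      refine ⟨n % m, n / m, ⟨⟨hr, Nat.mod_lt n hmpos⟩, ?_⟩, hdiv⟩
      by_contra! hle
      exact hn (hdiv ▸ (hx _ hr (Nat.mod_lt n hmpos) _).2 hle)
    · rintro ⟨r, q, ⟨⟨hr, hrm⟩, hq⟩, rfl⟩ hn
      have := (hx r hr hrm q).1 hn
      omega
  rw [hgaps, Set.ncard_coe_finset, card_image_of_injOn, card_sigma]
  · simp only [card_range]
  · rintro ⟨r, q⟩ hp ⟨r', q'⟩ hp' h
    simp only [coe_sigma, Set.mem_sigma_iff, mem_coe, mem_Ico] at hp hp' h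
    obtain ⟨rfl, rfl⟩ := Nat.eq_and_eq_of_mul_add_eq hp.1.2 hp'.1.2 h
    rfl

lemma apery_mem_minGenerators {i : ℕ} (hi : 0 < i) (him : i < m)
    (hnd : ¬ IsDecomposable m x i) : x i * m + i ∈ minGenerators S := by
  refine ⟨⟨hx.apery_mem hi him, by simp; omega⟩, ?_⟩
  rintro ⟨a, ⟨haS, ha0⟩, b, ⟨hbS, hb0⟩, hab⟩
  simp only [Set.mem_singleton_iff] at ha0 hb0
  have hmpos : 0 < m := by omega
  have hres : (a + b) % m = i := by
    rw [← hab, mul_comm, Nat.mul_add_mod, Nat.mod_eq_of_lt him]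
  -- a summand divisible by `m` would leave the other one in the class of `i` below `x i * m + i`
  rcases Nat.eq_zero_or_pos (a % m) with ha | ha
  · rw [Nat.add_mod, ha, zero_add, Nat.mod_mod] at hres
    have := hx.apery_le hi him hres hbS
    omega
  rcases Nat.eq_zero_or_pos (b % m) with hb | hb
  · rw [Nat.add_mod, hb, add_zero, Nat.mod_mod] at hres
    have := hx.apery_le hi him hres haS
    omega
  have hsum := S.add_mem (hx.apery_mem ha (Nat.mod_lt a hmpos))
    (hx.apery_mem hb (Nat.mod_lt b hmpos))
  have hsum_res : (x (a % m) * m + a % m + (x (b % m) * m + b % m)) % m = i := by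
    rw [show x (a % m) * m + a % m + (x (b % m) * m + b % m)
        = a % m + b % m + (x (a % m) + x (b % m)) * m by ring,
      Nat.add_mul_mod_self_right, ← Nat.add_mod, hres]
  have := hx.apery_le hi him hsum_res hsum
  have := hx.apery_le ha (Nat.mod_lt a hmpos) rfl haS
  have := hx.apery_le hb (Nat.mod_lt b hmpos) rfl hbS
  exact hnd ((isDecomposable_iff him).2
    ⟨a % m, b % m, ⟨ha, Nat.mod_lt a hmpos⟩, ⟨hb, Nat.mod_lt b hmpos⟩, by omega⟩)

lemma eq_of_mem_minGenerators (hm : IsLeast (↑S \ {0}) m) {n : ℕ} (hn : n ∈ minGenerators S) :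
    n = m ∨ ∃ i, (0 < i ∧ i < m) ∧ ¬ IsDecomposable m x i ∧ x i * m + i = n := by
  obtain ⟨⟨hnS, hn0⟩, hirr⟩ := hn
  have hmn := hm.2 ⟨hnS, hn0⟩
  have hmpos : 0 < m := Nat.pos_of_ne_zero hm.1.2
  rcases Nat.eq_zero_or_pos (n % m) with hr | hr
  · left
    by_contra hne
    refine hirr ⟨m, hm.1, n - m, ⟨mem_of_mod_eq_zero hm.1.1
      (Nat.sub_mod_eq_zero_of_mod_eq (by simp [hr])), by simp; omega⟩, by omega⟩
  right
  have hrm := Nat.mod_lt n hmpos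
  have hle := hx.apery_le hr hrm rfl hnS
  have hres : (x (n % m) * m + n % m) % m = n % m := by
    rw [mul_comm, Nat.mul_add_mod, Nat.mod_mod]
  have hw : x (n % m) * m + n % m = n := by
    by_contra hne
    refine hirr ⟨_, ⟨hx.apery_mem hr hrm, by simp; omega⟩, n - (x (n % m) * m + n % m),
      ⟨mem_of_mod_eq_zero hm.1.1 (Nat.sub_mod_eq_zero_of_mod_eq hres.symm), by simp; omega⟩,
      by omega⟩
  refine ⟨n % m, ⟨hr, hrm⟩, fun hdec => ?_, hw⟩
  obtain ⟨j, k, ⟨hj, hjm⟩, ⟨hk, hkm⟩, hjk⟩ := (isDecomposable_iff hrm).1 hdec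
  exact hirr ⟨_, ⟨hx.apery_mem hj hjm, by simp; omega⟩, _, ⟨hx.apery_mem hk hkm, by simp; omega⟩,
    by omega⟩

open scoped Classical in
lemma ncard_minGenerators (hm : IsLeast (↑S \ {0}) m) :
    (minGenerators S).ncard = #{i ∈ Ico 1 m | ¬ IsDecomposable m x i} + 1 := by
  have hgens : minGenerators S =
      ↑(insert m ({i ∈ Ico 1 m | ¬ IsDecomposable m x i}.image fun i => x i * m + i)) := by
    ext n
    simp only [coe_insert, coe_image, coe_filter, mem_Ico, Set.mem_insert_iff, Set.mem_image,
      Set.mem_ofPred_eq]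
    constructor
    · rintro hn
      rcases hx.eq_of_mem_minGenerators hm hn with rfl | ⟨i, hi, hnd, rfl⟩
      · exact .inl rfl
      · exact .inr ⟨i, ⟨hi, hnd⟩, rfl⟩
    · rintro (rfl | ⟨i, ⟨⟨hi, him⟩, hnd⟩, rfl⟩)
      · exact self_mem_minGenerators hm
      · exact hx.apery_mem_minGenerators hi him hnd
  rw [hgens, Set.ncard_coe_finset, card_insert_of_notMem, card_image_of_injOn]
  · intro i hi j hj hij
    simp only [coe_filter, mem_Ico, Set.mem_ofPred_eq] at hi hj
    exact (Nat.eq_and_eq_of_mul_add_eq hi.1.2 hj.1.2 hij).2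
  · simp only [mem_image, mem_filter, mem_Ico, not_exists, not_and]
    rintro i ⟨⟨hi, him⟩, -⟩ heq
    have := Nat.mul_le_mul_right m (hx.one_le hm hi him)
    omega

lemma sum_bound {i : ℕ} (hi : 0 < i) (him : i < m) :
    (x i - 2) * (i - 1) + 2 * (x i - 1) + (x i - 3) * (m - 1 - i)
      ≤ 2 * ∑ j ∈ Ico 1 m, (x j - 1) := by
  refine sum_Ico_pair_bound (fun j => x j - 1) hi him (fun j hj => ?_) (fun j hj => ?_)
  · rw [mem_Ico] at hj
    have := hx.le_add (j := j) (k := i - j) (by omega) (by omega) (by omega)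
    rw [Nat.add_sub_cancel' hj.2.le] at this
    omega
  · rw [mem_Ico] at hj
    have := hx.le_add_add_one (j := j) (k := m + i - j) hi him hj.2 (by omega) (by omega)
    omega

lemma sum_bound_of_not_isDecomposable (hm : IsLeast (↑S \ {0}) m) {i : ℕ} (hi : 0 < i) (him : i < m)
    (hnd : ¬ IsDecomposable m x i) :
    (x i - 1) * (i - 1) + 2 * (x i - 1) + (x i - 2) * (m - 1 - i)
      ≤ 2 * ∑ j ∈ Ico 1 m, (x j - 1) := by
  refine sum_Ico_pair_bound (fun j => x j - 1) hi him (fun j hj => ?_) (fun j hj => ?_)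
  · rw [mem_Ico] at hj
    have := hx.le_add (j := j) (k := i - j) (by omega) (by omega) (by omega)
    have hne : x j + x (i - j) ≠ x i := fun h =>
      hnd ⟨j, i - j, ⟨by omega, by omega⟩, ⟨by omega, by omega⟩, .inl ⟨by omega, h⟩⟩
    have := hx.one_le hm (r := j) (by omega) (by omega)
    have := hx.one_le hm (r := i - j) (by omega) (by omega)
    rw [Nat.add_sub_cancel' hj.2.le] at *
    omega
  · rw [mem_Ico] at hj
    have := hx.le_add_add_one (j := j) (k := m + i - j) hi him hj.2 (by omega) (by omega)
    have hne : x j + x (m + i - j) + 1 ≠ x i := fun h =>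
      hnd ⟨j, m + i - j, ⟨by omega, hj.2⟩, ⟨by omega, by omega⟩, .inr ⟨by omega, h⟩⟩
    have := hx.one_le hm (r := j) (by omega) hj.2
    have := hx.one_le hm (r := m + i - j) (by omega) (by omega)
    omega

lemma le_three (h2K : 2 * ∑ j ∈ Ico 1 m, (x j - 1) ≤ m) {i : ℕ} (hi : 0 < i) (him : i < m) :
    x i ≤ 3 := by
  by_contra! h
  have := hx.sum_bound hi him
  have := Nat.mul_le_mul_right (i - 1) (by omega : 2 ≤ x i - 2)
  have := Nat.mul_le_mul_right (m - 1 - i) (by omega : 1 ≤ x i - 3)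
  omega

lemma add_three_le_of_eq_three {i : ℕ} (hi : 0 < i) (him : i < m) (h3 : x i = 3) :
    i + 3 ≤ 2 * ∑ j ∈ Ico 1 m, (x j - 1) := by
  have := hx.sum_bound hi him
  rw [h3] at this
  omega

lemma isDecomposable_of_eq_three (hm : IsLeast (↑S \ {0}) m)
    (h2K : 2 * ∑ j ∈ Ico 1 m, (x j - 1) ≤ m) {i : ℕ} (hi : 0 < i) (him : i < m) (h3 : x i = 3) :
    IsDecomposable m x i := by
  by_contra hnd
  have := hx.sum_bound_of_not_isDecomposable hm hi him hnd
  rw [h3] at this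
  omega

lemma add_one_le_of_not_isDecomposable (hm : IsLeast (↑S \ {0}) m) {i : ℕ} (hi : 0 < i)
    (him : i < m) (h2 : x i = 2) (hnd : ¬ IsDecomposable m x i) :
    i + 1 ≤ 2 * ∑ j ∈ Ico 1 m, (x j - 1) := by
  have := hx.sum_bound_of_not_isDecomposable hm hi him hnd
  rw [h2] at this
  omega

lemma not_isDecomposable_iff (hm : IsLeast (↑S \ {0}) m) {K : ℕ}
    (hK : ∑ j ∈ Ico 1 m, (x j - 1) = K) (h2K : 2 * K ≤ m) {i : ℕ} (hi : 0 < i) (him : i < m) :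
    ¬ IsDecomposable m x i ↔ x i = 1 ∨ i < 2 * K ∧ x i = 2 ∧
      ¬ ∃ j₁ j₂ : ℕ, (1 ≤ j₁ ∧ j₁ < 2 * K) ∧ (1 ≤ j₂ ∧ j₂ < 2 * K) ∧ j₁ + j₂ = i ∧
        x j₁ = 1 ∧ x j₂ = 1 ∧ x i = 2 := by
  subst hK
  have hpos : ∀ j, 0 < j → j < m → 1 ≤ x j := fun j => hx.one_le hm
  rcases (by have := hpos i hi him; have := hx.le_three h2K hi him; omega :
    x i = 1 ∨ x i = 2 ∨ x i = 3) with hxi | hxi | hxi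
  · simp only [hxi, true_or, iff_true]
    rintro ⟨j, k, ⟨hj, hjm⟩, ⟨hk, hkm⟩, h | h⟩ <;>
      · have := hpos j hj hjm
        have := hpos k hk hkm
        omega
  · simp only [hxi, OfNat.ofNat_ne_one, false_or, and_true, true_and]
    constructor
    · intro hnd
      refine ⟨by have := hx.add_one_le_of_not_isDecomposable hm hi him hxi hnd; omega, ?_⟩
      rintro ⟨j, k, hj, hk, hjk, hxj, hxk⟩
      exact hnd ⟨j, k, ⟨by omega, by omega⟩, ⟨by omega, by omega⟩, .inl ⟨hjk, by omega⟩⟩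
    · rintro ⟨hi2K, hno⟩ ⟨j, k, ⟨hj, hjm⟩, ⟨hk, hkm⟩, h | h⟩ <;>
        have := hpos j hj hjm <;> have := hpos k hk hkm
      · exact hno ⟨j, k, ⟨hj, by omega⟩, ⟨hk, by omega⟩, h.1, by omega, by omega⟩
      · omega
  · have := hx.isDecomposable_of_eq_three hm h2K hi him hxi
    simp [hxi, this]

open scoped Classical in
theorem ncard_minGenerators_add_eq (hm : IsLeast (↑S \ {0}) m)
    {K : ℕ} (hK : ∑ j ∈ Ico 1 m, (x j - 1) = K) (h2K : 2 * K ≤ m) :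
    (minGenerators S).ncard + K + {i : ℕ | 1 ≤ i ∧ i < 2 * K ∧
        ∃ j₁ j₂ : ℕ, (1 ≤ j₁ ∧ j₁ < 2 * K) ∧ (1 ≤ j₂ ∧ j₂ < 2 * K) ∧ j₁ + j₂ = i ∧
          x j₁ = 1 ∧ x j₂ = 1 ∧ x i = 2}.ncard
      = m + {i : ℕ | 1 ≤ i ∧ i < 2 * K ∧ x i = 2}.ncard
        + {i : ℕ | 1 ≤ i ∧ i < 2 * K ∧ x i = 3}.ncard := by
  simp only [ncard_setOf_le_lt, hx.ncard_minGenerators hm]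
  set P : ℕ → Prop := fun i => ∃ j₁ j₂ : ℕ, (1 ≤ j₁ ∧ j₁ < 2 * K) ∧ (1 ≤ j₂ ∧ j₂ < 2 * K) ∧
    j₁ + j₂ = i ∧ x j₁ = 1 ∧ x j₂ = 1 ∧ x i = 2
  have hval : ∀ i ∈ Ico 1 m, 1 ≤ x i ∧ x i ≤ 3 := fun i hi =>
    ⟨hx.one_le hm (mem_Ico.1 hi).1 (mem_Ico.1 hi).2,
      hx.le_three (hK ▸ h2K) (mem_Ico.1 hi).1 (mem_Ico.1 hi).2⟩
  have hcard := card_eq_card_filter_eq_one_add _ _ hval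
  have hsum := sum_sub_one_eq_card_filter_eq_two_add _ _ hval
  rw [Nat.card_Ico] at hcard
  have hindec : {i ∈ Ico 1 m | ¬ IsDecomposable m x i}
      = {i ∈ Ico 1 m | x i = 1} ∪ {i ∈ Ico 1 (2 * K) | x i = 2 ∧ ¬ P i} := by
    ext i
    simp only [mem_filter, mem_union, mem_Ico]
    constructor
    · rintro ⟨⟨hi, him⟩, hnd⟩
      rcases (hx.not_isDecomposable_iff hm hK h2K hi him).1 hnd with h1 | ⟨hi2K, h2, hno⟩
      · exact .inl ⟨⟨hi, him⟩, h1⟩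
      · exact .inr ⟨⟨hi, hi2K⟩, h2, hno⟩
    · rintro (⟨⟨hi, him⟩, h1⟩ | ⟨⟨hi, hi2K⟩, h2, hno⟩)
      · exact ⟨⟨hi, him⟩, (hx.not_isDecomposable_iff hm hK h2K hi him).2 (.inl h1)⟩
      · exact ⟨⟨hi, by omega⟩,
          (hx.not_isDecomposable_iff hm hK h2K hi (by omega)).2 (.inr ⟨hi2K, h2, hno⟩)⟩
  have hdisj : Disjoint {i ∈ Ico 1 m | x i = 1} {i ∈ Ico 1 (2 * K) | x i = 2 ∧ ¬ P i} :=
    disjoint_left.2 fun i h1 h2 => by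
      rw [mem_filter] at h1 h2
      omega
  have hsplit : #{i ∈ Ico 1 (2 * K) | x i = 2 ∧ ¬ P i} + #{i ∈ Ico 1 (2 * K) | P i}
      = #{i ∈ Ico 1 (2 * K) | x i = 2} := by
    have hP2 : {i ∈ Ico 1 (2 * K) | x i = 2 ∧ P i} = {i ∈ Ico 1 (2 * K) | P i} :=
      filter_congr fun i _ => and_iff_right_of_imp fun ⟨_, _, _, _, _, _, _, h⟩ => h
    rw [← card_filter_add_card_filter_not (s := {i ∈ Ico 1 (2 * K) | x i = 2}) P,
      filter_filter, filter_filter, hP2, add_comm]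
  have hthree : {i ∈ Ico 1 (2 * K) | x i = 3} = {i ∈ Ico 1 m | x i = 3} := by
    ext i
    simp only [mem_filter, mem_Ico]
    constructor
    · rintro ⟨⟨hi, hi2K⟩, h3⟩
      exact ⟨⟨hi, by omega⟩, h3⟩
    · rintro ⟨⟨hi, him⟩, h3⟩
      exact ⟨⟨hi, by have := hx.add_three_le_of_eq_three hi him h3; omega⟩, h3⟩
  rw [hindec, card_union_of_disjoint hdisj, hthree]
  -- `set` could not abstract `P` inside its decidability instance
  change _ + K + #{i ∈ Ico 1 (2 * K) | P i} = _
  have : m ≠ 0 := hm.1.2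
  omega

end IsKunzCoords

end NumericalSemigroup

theorem stmt_18_general (S : Set ℕ) (h0 : 0 ∈ S) (hadd : ∀ a ∈ S, ∀ b ∈ S, a + b ∈ S)
    (m g : ℕ) (k₁ : ℤ)
    (hm : sInf (S \ {0}) = m) (hg : Sᶜ.ncard = g)
    (hmg : (m : ℤ) = (g : ℤ) - k₁) (hgk : 3 * k₁ + 2 ≤ (g : ℤ))
    (x : ℕ → ℕ)
    (hx : ∀ i, 1 ≤ i → i ≤ m - 1 → x i * m + i ∈ S ∧ (x i - 1) * m + i ∉ S) :
    (((S \ {0}) \ {y | ∃ a ∈ S \ {0}, ∃ b ∈ S \ {0}, y = a + b}).ncard : ℤ)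
      = (g : ℤ) - 2 * k₁ - 1
        + ({i : ℕ | 1 ≤ i ∧ (i : ℤ) ≤ 2 * k₁ + 1 ∧ x i = 2}.ncard : ℤ)
        + ({i : ℕ | 1 ≤ i ∧ (i : ℤ) ≤ 2 * k₁ + 1 ∧ x i = 3}.ncard : ℤ)
        - ({i : ℕ | 1 ≤ i ∧ (i : ℤ) ≤ 2 * k₁ + 1 ∧
            ∃ j₁ j₂ : ℕ, (1 ≤ j₁ ∧ (j₁ : ℤ) ≤ 2 * k₁ + 1) ∧
              (1 ≤ j₂ ∧ (j₂ : ℤ) ≤ 2 * k₁ + 1) ∧ j₁ + j₂ = i ∧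
              x j₁ = 1 ∧ x j₂ = 1 ∧ x i = 2}.ncard : ℤ) := by
  let T : AddSubmonoid ℕ := ⟨⟨S, fun ha hb => hadd _ ha _ hb⟩, h0⟩
  have hmin : IsLeast (↑T \ {0}) m := Nat.isLeast_of_sInf_eq hm (by omega)
  have hkunz := NumericalSemigroup.isKunzCoords_of_forall hmin.1.1 hx
  set K := ∑ j ∈ Finset.Ico 1 m, (x j - 1)
  have hgenus : g = K + (m - 1) := by
    rw [← hg, ← hkunz.sum_eq_sum_sub_one_add hmin]
    exact hkunz.ncard_compl hmin
  have hbound : ∀ n : ℕ, (n : ℤ) ≤ 2 * k₁ + 1 ↔ n < 2 * K := fun n => by omega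
  have key := hkunz.ncard_minGenerators_add_eq hmin (K := K) rfl (by omega)
  change (NumericalSemigroup.minGenerators S).ncard + _ + _ = _ at key
  simp only [hbound]
  change ((NumericalSemigroup.minGenerators S).ncard : ℤ) = _
  omega

theorem stmt_18 (S : Set ℕ) (h0 : 0 ∈ S) (hadd : ∀ a ∈ S, ∀ b ∈ S, a + b ∈ S)
    (hfin : Sᶜ.Finite) (m g : ℕ) (k₁ : ℤ) (hk₁ : -1 ≤ k₁)
    (hm : sInf (S \ {0}) = m) (hg : Sᶜ.ncard = g)
    (hmg : (m : ℤ) = (g : ℤ) - k₁) (hgk : 3 * k₁ + 2 ≤ (g : ℤ))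
    (x : ℕ → ℕ)
    (hx : ∀ i, 1 ≤ i → i ≤ m - 1 → x i * m + i ∈ S ∧ (x i - 1) * m + i ∉ S) :
    (((S \ {0}) \ {y | ∃ a ∈ S \ {0}, ∃ b ∈ S \ {0}, y = a + b}).ncard : ℤ)
      = (g : ℤ) - 2 * k₁ - 1
        + ({i : ℕ | 1 ≤ i ∧ (i : ℤ) ≤ 2 * k₁ + 1 ∧ x i = 2}.ncard : ℤ)
        + ({i : ℕ | 1 ≤ i ∧ (i : ℤ) ≤ 2 * k₁ + 1 ∧ x i = 3}.ncard : ℤ)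
        - ({i : ℕ | 1 ≤ i ∧ (i : ℤ) ≤ 2 * k₁ + 1 ∧
            ∃ j₁ j₂ : ℕ, (1 ≤ j₁ ∧ (j₁ : ℤ) ≤ 2 * k₁ + 1) ∧
              (1 ≤ j₂ ∧ (j₂ : ℤ) ≤ 2 * k₁ + 1) ∧ j₁ + j₂ = i ∧
              x j₁ = 1 ∧ x j₂ = 1 ∧ x i = 2}.ncard : ℤ) :=
  stmt_18_general S h0 hadd m g k₁ hm hg hmg hgk x hx
end
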